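/- arXiv:2301.02536 — 2 statements merged into one kernel-verified Lean document; each statement's English description precedes it below -/
import Mathlib

section
/- If system x(n+1)=A(n)x(n) has a Bohl dichotomy on a splitting L₁ ⊕ L₂ = ℝ^d, then L₁ = S₀ = {x₀ : lim_{n→∞} x(n,x₀) = 0}; in particular the subspace L₁ in a Bohl dichotomy is unique. -/
open Filter Topology

noncomputable section

abbrev Euc (d : ℕ) := EuclideanSpace ℝ (Fin d)

/-- forward product `A(m+k-1) ⋯ A(m)` -/
def fwd {d : ℕ} (A : ℕ → (Euc d →L[ℝ] Euc d)) (m : ℕ) : ℕ → (Euc d →L[ℝ] Euc d)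
  | 0 => 1
  | k + 1 => A (m + k) * fwd A m k

/-- backward product `Ainv(n) ⋯ Ainv(n+k-1)` -/
def bwd {d : ℕ} (Ainv : ℕ → (Euc d →L[ℝ] Euc d)) (n : ℕ) : ℕ → (Euc d →L[ℝ] Euc d)
  | 0 => 1
  | k + 1 => bwd Ainv n k * Ainv (n + k)

/-- transition matrix Φ_A(n,m) -/
def Phi {d : ℕ} (A Ainv : ℕ → (Euc d →L[ℝ] Euc d)) (n m : ℕ) : Euc d →L[ℝ] Euc d :=
  if m ≤ n then fwd A m (n - m) else bwd Ainv n (m - n)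

/-- A is a bounded sequence of invertible maps with bounded inverse sequence Ainv -/
def IsLyapunov {d : ℕ} (A Ainv : ℕ → (Euc d →L[ℝ] Euc d)) : Prop :=
  (∀ n, A n * Ainv n = 1) ∧ (∀ n, Ainv n * A n = 1) ∧
    BddAbove (Set.range fun n => ‖A n‖) ∧ BddAbove (Set.range fun n => ‖Ainv n‖)

/-- `‖A‖_∞ = sup_n ‖A(n)‖` -/
def supNorm {d : ℕ} (A : ℕ → (Euc d →L[ℝ] Euc d)) : ℝ := ⨆ n, ‖A n‖

/-- solution `x(n,x₀) = Φ_A(n,0) x₀` -/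
def sol {d : ℕ} (A : ℕ → (Euc d →L[ℝ] Euc d)) (n : ℕ) (x₀ : Euc d) : Euc d :=
  fwd A 0 n x₀

/-- `λ(n,m) = (1/(n-m)) ln (‖x(n,x₀)‖ / ‖x(m,x₀)‖)` -/
def lam {d : ℕ} (A : ℕ → (Euc d →L[ℝ] Euc d)) (n m : ℕ) (x₀ : Euc d) : ℝ :=
  Real.log (‖sol A n x₀‖ / ‖sol A m x₀‖) / ((n : ℝ) - (m : ℝ))

/-- upper Bohl exponent of a subspace -/
def upperBohl {d : ℕ} (A : ℕ → (Euc d →L[ℝ] Euc d)) (L : Set (Euc d)) : ℝ :=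
  ⨅ N : ℕ, sSup {r | ∃ n m : ℕ, ∃ x₀ : Euc d,
    N < n - m ∧ x₀ ∈ L ∧ x₀ ≠ 0 ∧ r = lam A n m x₀}

/-- lower Bohl exponent of a subspace -/
def lowerBohl {d : ℕ} (A : ℕ → (Euc d →L[ℝ] Euc d)) (L : Set (Euc d)) : ℝ :=
  ⨆ N : ℕ, sInf {r | ∃ n m : ℕ, ∃ x₀ : Euc d,
    N < n - m ∧ x₀ ∈ L ∧ x₀ ≠ 0 ∧ r = lam A n m x₀}

/-- upper Bohl exponent of a vector -/
def upperBohlVec {d : ℕ} (A : ℕ → (Euc d →L[ℝ] Euc d)) (x₀ : Euc d) : ℝ :=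
  ⨅ N : ℕ, sSup {r | ∃ n m : ℕ, N < n - m ∧ r = lam A n m x₀}

/-- lower Bohl exponent of a vector -/
def lowerBohlVec {d : ℕ} (A : ℕ → (Euc d →L[ℝ] Euc d)) (x₀ : Euc d) : ℝ :=
  ⨆ N : ℕ, sInf {r | ∃ n m : ℕ, N < n - m ∧ r = lam A n m x₀}

/-- Bohl spectrum -/
def bohlSpectrum {d : ℕ} (A : ℕ → (Euc d →L[ℝ] Euc d)) : Set ℝ :=
  {γ | ∃ x₀ : Euc d, x₀ ≠ 0 ∧ γ ∈ Set.Icc (lowerBohlVec A x₀) (upperBohlVec A x₀)}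

/-- the γ-shifted system `e^{-γ} A` -/
def shift {d : ℕ} (A : ℕ → (Euc d →L[ℝ] Euc d)) (γ : ℝ) : ℕ → (Euc d →L[ℝ] Euc d) :=
  fun n => Real.exp (-γ) • A n

/-- Bohl dichotomy on a given pair of subspaces -/
def HasBohlDichotomyOn {d : ℕ} (A : ℕ → (Euc d →L[ℝ] Euc d))
    (L₁ L₂ : Submodule ℝ (Euc d)) : Prop :=
  ∃ α : ℝ, 0 < α ∧ ∃ C₁ C₂ : Euc d → ℝ, (∀ x, 0 < C₁ x) ∧ (∀ x, 0 < C₂ x) ∧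
    (∀ x₀ ∈ L₁, ∀ m n : ℕ, m ≤ n →
      ‖sol A n x₀‖ ≤ C₁ x₀ * Real.exp (-α * ((n : ℝ) - (m : ℝ))) * ‖sol A m x₀‖) ∧
    (∀ x₀ ∈ L₂, ∀ m n : ℕ, m ≤ n →
      C₂ x₀ * Real.exp (α * ((n : ℝ) - (m : ℝ))) * ‖sol A m x₀‖ ≤ ‖sol A n x₀‖)

/-- Bohl dichotomy -/
def HasBohlDichotomy {d : ℕ} (A : ℕ → (Euc d →L[ℝ] Euc d)) : Prop :=
  ∃ L₁ L₂ : Submodule ℝ (Euc d), IsCompl L₁ L₂ ∧ HasBohlDichotomyOn A L₁ L₂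

/-- Bohl dichotomy spectrum -/
def bdSpectrum {d : ℕ} (A : ℕ → (Euc d →L[ℝ] Euc d)) : Set ℝ :=
  {γ | ¬ HasBohlDichotomy (shift A γ)}

/-! Solutions from `L₁` decay exponentially, while the solution from `0 ≠ q ∈ L₂` stays above
`C₂(q)‖q‖`. If the solution from `x₀ = p + q` (`p ∈ L₁`, `q ∈ L₂`) tends to `0`, so does the one
from `q`, being a difference of two solutions tending to `0`; hence `q = 0` and `x₀ ∈ L₁`. -/

section

variable {d : ℕ}

@[simp]
lemma sol_zero (A : ℕ → (Euc d →L[ℝ] Euc d)) (x : Euc d) : sol A 0 x = x := rfl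

lemma sol_add (A : ℕ → (Euc d →L[ℝ] Euc d)) (n : ℕ) (x y : Euc d) :
    sol A n (x + y) = sol A n x + sol A n y :=
  map_add (fwd A 0 n) x y

end

namespace HasBohlDichotomyOn

variable {d : ℕ} {A : ℕ → (Euc d →L[ℝ] Euc d)} {L₁ L₂ : Submodule ℝ (Euc d)} {x : Euc d}

lemma tendsto_sol_of_mem_left (h : HasBohlDichotomyOn A L₁ L₂) (hx : x ∈ L₁) :
    Tendsto (fun n => sol A n x) atTop (𝓝 0) := by
  obtain ⟨α, hα, C₁, -, -, -, h₁, -⟩ := h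
  have hbound (n : ℕ) : ‖sol A n x‖ ≤ C₁ x * Real.exp (-α * n) * ‖x‖ := by
    simpa using h₁ x hx 0 n n.zero_le
  have hexp : Tendsto (fun n : ℕ => Real.exp (-α * n)) atTop (𝓝 0) :=
    Real.tendsto_exp_atBot.comp
      (tendsto_natCast_atTop_atTop.const_mul_atTop_of_neg (neg_lt_zero.mpr hα))
  rw [tendsto_zero_iff_norm_tendsto_zero]
  refine squeeze_zero (fun n => norm_nonneg _) hbound ?_
  simpa using (hexp.const_mul (C₁ x)).mul_const ‖x‖

lemma eq_zero_of_mem_right_of_tendsto (h : HasBohlDichotomyOn A L₁ L₂) (hx : x ∈ L₂)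
    (hlim : Tendsto (fun n => sol A n x) atTop (𝓝 0)) : x = 0 := by
  obtain ⟨α, hα, -, C₂, -, hC₂, -, h₂⟩ := h
  have hbound (n : ℕ) : C₂ x * ‖x‖ ≤ ‖sol A n x‖ :=
    calc C₂ x * ‖x‖ ≤ C₂ x * Real.exp (α * n) * ‖x‖ := by
          gcongr
          exact le_mul_of_one_le_right (hC₂ x).le (Real.one_le_exp (by positivity))
      _ ≤ ‖sol A n x‖ := by simpa using h₂ x hx 0 n n.zero_le
  have hle : C₂ x * ‖x‖ ≤ 0 :=
    ge_of_tendsto' (tendsto_zero_iff_norm_tendsto_zero.mp hlim) hbound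
  exact norm_le_zero_iff.mp (nonpos_of_mul_nonpos_right hle (hC₂ x))

end HasBohlDichotomyOn

theorem stmt17_general {d : ℕ} (A : ℕ → (Euc d →L[ℝ] Euc d))
    (L₁ L₂ : Submodule ℝ (Euc d)) (hc : IsCompl L₁ L₂)
    (h : HasBohlDichotomyOn A L₁ L₂) :
    (L₁ : Set (Euc d)) = {x₀ : Euc d | Tendsto (fun n => sol A n x₀) atTop (nhds 0)} := by
  ext x₀
  refine ⟨h.tendsto_sol_of_mem_left, fun hx₀ => ?_⟩
  obtain ⟨p, q, hp, hq, rfl⟩ := Submodule.codisjoint_iff_exists_add_eq.mp hc.codisjoint x₀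
  have hq_lim : Tendsto (fun n => sol A n q) atTop (𝓝 0) := by
    simpa [sol_add] using hx₀.sub (h.tendsto_sol_of_mem_left hp)
  rw [h.eq_zero_of_mem_right_of_tendsto hq hq_lim, add_zero]
  exact hp

theorem stmt17 {d : ℕ} (A Ainv : ℕ → (Euc d →L[ℝ] Euc d)) (hA : IsLyapunov A Ainv)
    (L₁ L₂ : Submodule ℝ (Euc d)) (hc : IsCompl L₁ L₂)
    (h : HasBohlDichotomyOn A L₁ L₂) :
    (L₁ : Set (Euc d)) = {x₀ : Euc d | Tendsto (fun n => sol A n x₀) atTop (nhds 0)} :=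
  stmt17_general A L₁ L₂ hc h
end
end

section
/- If two systems x(n+1)=A(n)x(n) and y(n+1)=B(n)y(n) are dynamically equivalent via a Lyapunov transformation T (i.e. B(n) = T(n+1)⁻¹A(n)T(n) with T, T⁻¹ bounded), then for every subspace L ⊆ ℝ^d the Bohl exponents satisfy β̄_A(L) = β̄_B(T(0)⁻¹L) and β̲_A(L) = β̲_B(T(0)⁻¹L). -/
open Filter Topology

noncomputable section

/-!
Along solutions, `y(n) = T(n)⁻¹ x(n)` with `T` and `T⁻¹` bounded by `c`, so `log ‖y(n)‖` and
`log ‖x(n)‖` stay within `log c` of each other and the growth rates `λ_B(n, m, T(0)⁻¹ x₀)` and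
`λ_A(n, m, x₀)` differ by at most `2 log c / (n - m)`. The rates of `A` are bounded, so the
suprema (infima) of the rates over `n - m > N` are monotone and bounded in `N`, hence converge to
the Bohl exponents; as their difference for `A` and `B` is `O(1 / N)`, the limits agree.
-/

section BohlRates

variable {E : Type*} [Zero E]

def bohlRates (f : ℕ → ℕ → E → ℝ) (L : Set E) (N : ℕ) : Set ℝ :=
  {r | ∃ n m : ℕ, ∃ x₀ : E, N < n - m ∧ x₀ ∈ L ∧ x₀ ≠ 0 ∧ r = f n m x₀}

theorem antitone_bohlRates (f : ℕ → ℕ → E → ℝ) (L : Set E) : Antitone (bohlRates f L) := by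
  rintro N N' hN _ ⟨n, m, x, hx, hxL, hx0, rfl⟩
  exact ⟨n, m, x, by omega, hxL, hx0, rfl⟩

theorem bohlRates_nonempty (f : ℕ → ℕ → E → ℝ) {L : Set E} (hL : ∃ x ∈ L, x ≠ 0) (N : ℕ) :
    (bohlRates f L N).Nonempty := by
  obtain ⟨x, hxL, hx0⟩ := hL
  exact ⟨_, N + 1, 0, x, by omega, hxL, hx0, rfl⟩

theorem bohlRates_eq_empty (f : ℕ → ℕ → E → ℝ) {L : Set E} (hL : ∀ x ∈ L, x = 0) (N : ℕ) :
    bohlRates f L N = ∅ :=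
  Set.eq_empty_of_forall_notMem fun _ ⟨_, _, x, _, hxL, hx0, _⟩ => hx0 (hL x hxL)

theorem neg_bohlRates (f : ℕ → ℕ → E → ℝ) (L : Set E) (N : ℕ) :
    -bohlRates f L N = bohlRates (-f) L N := by
  ext r
  simp [bohlRates, neg_eq_iff_eq_neg]

theorem bohlRates_image {F : Type*} [Zero F] (f : ℕ → ℕ → F → ℝ) (L : Set E) {S : E → F}
    (hS : Function.Injective S) (hS0 : S 0 = 0) :
    bohlRates f (S '' L) = bohlRates (fun n m x => f n m (S x)) L := by
  ext N r
  constructor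
  · rintro ⟨n, m, _, hN, ⟨x, hxL, rfl⟩, hx0, rfl⟩
    exact ⟨n, m, x, hN, hxL, fun h => hx0 (h ▸ hS0), rfl⟩
  · rintro ⟨n, m, x, hN, hxL, hx0, rfl⟩
    exact ⟨n, m, S x, hN, ⟨x, hxL, rfl⟩, fun h => hx0 (hS (h.trans hS0.symm)), rfl⟩

theorem add_one_le_cast_sub_cast {N n m : ℕ} (h : N < n - m) : (N : ℝ) + 1 ≤ n - m := by
  have h' : (N + 1 + m : ℝ) ≤ n := by exact_mod_cast (by omega : N + 1 + m ≤ n)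
  linarith

variable {f g : ℕ → ℕ → E → ℝ} {L : Set E} {K C : ℝ}

theorem abs_le_of_mem_bohlRates (hf : ∀ n m x, m < n → x ∈ L → x ≠ 0 → |f n m x| ≤ K) {N : ℕ}
    {r : ℝ} (hr : r ∈ bohlRates f L N) : |r| ≤ K := by
  obtain ⟨n, m, x, hN, hxL, hx0, rfl⟩ := hr
  exact hf n m x (by omega) hxL hx0

theorem bddAbove_bohlRates (hf : ∀ n m x, m < n → x ∈ L → x ≠ 0 → |f n m x| ≤ K) (N : ℕ) :
    BddAbove (bohlRates f L N) :=
  ⟨K, fun _ hr => le_of_abs_le (abs_le_of_mem_bohlRates hf hr)⟩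

theorem antitone_sSup_bohlRates (hL : ∃ x ∈ L, x ≠ 0)
    (hf : ∀ n m x, m < n → x ∈ L → x ≠ 0 → |f n m x| ≤ K) :
    Antitone fun N => sSup (bohlRates f L N) := fun _ _ hN =>
  csSup_le_csSup (bddAbove_bohlRates hf _) (bohlRates_nonempty f hL _) (antitone_bohlRates f L hN)

theorem bddBelow_range_sSup_bohlRates (hL : ∃ x ∈ L, x ≠ 0)
    (hf : ∀ n m x, m < n → x ∈ L → x ≠ 0 → |f n m x| ≤ K) :
    BddBelow (Set.range fun N => sSup (bohlRates f L N)) := by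
  refine ⟨-K, ?_⟩
  rintro _ ⟨N, rfl⟩
  obtain ⟨r, hr⟩ := bohlRates_nonempty f hL N
  exact (neg_le_of_abs_le (abs_le_of_mem_bohlRates hf hr)).trans
    (le_csSup (bddAbove_bohlRates hf N) hr)

theorem sSup_bohlRates_le_add (hL : ∃ x ∈ L, x ≠ 0)
    (hf : ∀ n m x, m < n → x ∈ L → x ≠ 0 → |f n m x| ≤ K)
    (hfg : ∀ n m x, m < n → x ∈ L → x ≠ 0 → |f n m x - g n m x| ≤ C / (n - m))
    (hC : 0 ≤ C) (N : ℕ) :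
    sSup (bohlRates g L N) ≤ sSup (bohlRates f L N) + C / (N + 1) := by
  refine csSup_le (bohlRates_nonempty g hL N) ?_
  rintro _ ⟨n, m, x, hN, hxL, hx0, rfl⟩
  have hgap := add_one_le_cast_sub_cast hN
  calc g n m x ≤ f n m x + C / (n - m) := by
        linarith [(abs_sub_le_iff.1 (hfg n m x (by omega) hxL hx0)).2]
    _ ≤ sSup (bohlRates f L N) + C / (N + 1) :=
        add_le_add (le_csSup (bddAbove_bohlRates hf N) ⟨n, m, x, hN, hxL, hx0, rfl⟩)
          (div_le_div_of_nonneg_left hC (by positivity) hgap)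

theorem iInf_eq_iInf_of_tendsto_sub {u v : ℕ → ℝ} (hu : Antitone u) (hv : Antitone v)
    (hu' : BddBelow (Set.range u)) (hv' : BddBelow (Set.range v))
    (huv : Tendsto (u - v) atTop (𝓝 0)) : ⨅ n, u n = ⨅ n, v n :=
  sub_eq_zero.1 <| tendsto_nhds_unique
    ((tendsto_atTop_ciInf hu hu').sub (tendsto_atTop_ciInf hv hv')) huv

theorem iInf_sSup_bohlRates_eq (hf : ∀ n m x, m < n → x ∈ L → x ≠ 0 → |f n m x| ≤ K)
    (hfg : ∀ n m x, m < n → x ∈ L → x ≠ 0 → |f n m x - g n m x| ≤ C / (n - m))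
    (hC : 0 ≤ C) : ⨅ N, sSup (bohlRates f L N) = ⨅ N, sSup (bohlRates g L N) := by
  by_cases hL : ∃ x ∈ L, x ≠ 0
  swap
  · push Not at hL
    simp only [bohlRates_eq_empty _ hL]
  have hg : ∀ n m x, m < n → x ∈ L → x ≠ 0 → |g n m x| ≤ K + C := fun n m x hmn hxL hx0 => by
    have hgap : (1 : ℝ) ≤ n - m := by
      have : (m + 1 : ℝ) ≤ n := by exact_mod_cast hmn
      linarith
    calc |g n m x| = |f n m x - (f n m x - g n m x)| := by rw [sub_sub_cancel]
      _ ≤ |f n m x| + |f n m x - g n m x| := abs_sub _ _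
      _ ≤ K + C := add_le_add (hf n m x hmn hxL hx0)
          ((hfg n m x hmn hxL hx0).trans (div_le_self hC hgap))
  have hgf : ∀ n m x, m < n → x ∈ L → x ≠ 0 → |g n m x - f n m x| ≤ C / (n - m) :=
    fun n m x hmn hxL hx0 => abs_sub_comm (f n m x) _ ▸ hfg n m x hmn hxL hx0
  refine iInf_eq_iInf_of_tendsto_sub (antitone_sSup_bohlRates hL hf)
    (antitone_sSup_bohlRates hL hg) (bddBelow_range_sSup_bohlRates hL hf)
    (bddBelow_range_sSup_bohlRates hL hg) (squeeze_zero_norm (a := fun N : ℕ => C / (N + 1))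
      (fun N => abs_sub_le_iff.2 ⟨?_, ?_⟩) ?_)
  · linarith [sSup_bohlRates_le_add hL hg hgf hC N]
  · linarith [sSup_bohlRates_le_add hL hf hfg hC N]
  · simpa only [mul_one_div, mul_zero] using
      (tendsto_one_div_add_atTop_nhds_zero_nat (𝕜 := ℝ)).const_mul C

theorem Real.iSup_neg_eq_neg_iInf {ι : Sort*} (u : ι → ℝ) : ⨆ i, -u i = -⨅ i, u i := by
  rw [iInf, Real.sInf_def, neg_neg, Set.neg_range, iSup]

theorem iSup_sInf_bohlRates_eq (hf : ∀ n m x, m < n → x ∈ L → x ≠ 0 → |f n m x| ≤ K)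
    (hfg : ∀ n m x, m < n → x ∈ L → x ≠ 0 → |f n m x - g n m x| ≤ C / (n - m))
    (hC : 0 ≤ C) : ⨆ N, sInf (bohlRates f L N) = ⨆ N, sInf (bohlRates g L N) := by
  simp only [Real.sInf_def, neg_bohlRates, Real.iSup_neg_eq_neg_iInf]
  congr 1
  refine iInf_sSup_bohlRates_eq (K := K) (C := C) (fun n m x hmn hxL hx0 => ?_)
    (fun n m x hmn hxL hx0 => ?_) hC
  · simpa only [Pi.neg_apply, abs_neg] using hf n m x hmn hxL hx0
  · simpa only [Pi.neg_apply, neg_sub_neg, abs_sub_comm] using hfg n m x hmn hxL hx0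

end BohlRates

theorem abs_log_sub_log_le {a b c : ℝ} (ha : 0 < a) (hb : 0 < b) (hab : a ≤ c * b)
    (hba : b ≤ c * a) : |Real.log a - Real.log b| ≤ Real.log c := by
  have hc : 0 < c := pos_of_mul_pos_left (ha.trans_le hab) hb.le
  rw [abs_sub_le_iff]
  constructor
  · have := Real.log_le_log ha hab
    rw [Real.log_mul hc.ne' hb.ne'] at this
    linarith
  · have := Real.log_le_log hb hba
    rw [Real.log_mul hc.ne' ha.ne'] at this
    linarith

theorem abs_sub_le_of_abs_succ_sub_le {u : ℕ → ℝ} {K : ℝ} (h : ∀ j, |u (j + 1) - u j| ≤ K)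
    {m n : ℕ} (hmn : m ≤ n) : |u n - u m| ≤ (n - m) * K := by
  induction n, hmn using Nat.le_induction with
  | base => simp
  | succ n _ ih =>
    calc |u (n + 1) - u m| ≤ |u (n + 1) - u n| + |u n - u m| := abs_sub_le _ _ _
      _ ≤ K + (n - m) * K := add_le_add (h n) ih
      _ = ((n + 1 : ℕ) - m) * K := by push_cast; ring

namespace ContinuousLinearMap

variable {𝕜 E : Type*} [NontriviallyNormedField 𝕜] [NormedAddCommGroup E] [NormedSpace 𝕜 E]
  {S S' : E →L[𝕜] E}

theorem leftInverse_of_mul_eq_one (h : S' * S = 1) : Function.LeftInverse S' S := fun x => by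
  simpa only [mul_apply_eq_comp, one_apply_eq_self] using DFunLike.congr_fun h x

theorem abs_log_norm_apply_sub_le {c : ℝ} (hS : ‖S‖ ≤ c) (hS' : ‖S'‖ ≤ c) (h : S' * S = 1)
    {x : E} (hx : x ≠ 0) : |Real.log ‖S x‖ - Real.log ‖x‖| ≤ Real.log c := by
  have hinv := leftInverse_of_mul_eq_one h
  have hSx : S x ≠ 0 := (map_ne_zero_iff S hinv.injective).2 hx
  refine abs_log_sub_log_le (norm_pos_iff.2 hSx) (norm_pos_iff.2 hx) (S.le_of_opNorm_le hS x) ?_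
  calc ‖x‖ = ‖S' (S x)‖ := by rw [hinv x]
    _ ≤ c * ‖S x‖ := S'.le_of_opNorm_le hS' _

end ContinuousLinearMap

open ContinuousLinearMap

theorem IsLyapunov.exists_bound {d : ℕ} {A Ainv : ℕ → (Euc d →L[ℝ] Euc d)}
    (hA : IsLyapunov A Ainv) : ∃ c, 1 ≤ c ∧ ∀ n, ‖A n‖ ≤ c ∧ ‖Ainv n‖ ≤ c := by
  obtain ⟨-, -, ⟨a, ha⟩, ⟨b, hb⟩⟩ := hA
  exact ⟨max 1 (max a b), le_max_left _ _, fun n =>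
    ⟨(ha ⟨n, rfl⟩).trans ((le_max_left _ _).trans (le_max_right _ _)),
     (hb ⟨n, rfl⟩).trans ((le_max_right _ _).trans (le_max_right _ _))⟩⟩

theorem upperBohl_eq {d : ℕ} (A : ℕ → (Euc d →L[ℝ] Euc d)) (L : Set (Euc d)) :
    upperBohl A L = ⨅ N, sSup (bohlRates (lam A) L N) := rfl

theorem lowerBohl_eq {d : ℕ} (A : ℕ → (Euc d →L[ℝ] Euc d)) (L : Set (Euc d)) :
    lowerBohl A L = ⨆ N, sInf (bohlRates (lam A) L N) := rfl

section Solutions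

variable {d : ℕ} {A Ainv B T Tinv : ℕ → (Euc d →L[ℝ] Euc d)} {x : Euc d} {n m : ℕ}

theorem sol_succ : sol A (n + 1) x = A n (sol A n x) := by
  simp [sol, fwd]

theorem sol_ne_zero (hinv : ∀ n, Ainv n * A n = 1) (hx : x ≠ 0) (n : ℕ) : sol A n x ≠ 0 := by
  induction n with
  | zero => exact hx
  | succ n ih =>
    rw [sol_succ]
    exact (map_ne_zero_iff _ (leftInverse_of_mul_eq_one (hinv n)).injective).2 ih

theorem lam_eq_sub_div (hn : sol A n x ≠ 0) (hm : sol A m x ≠ 0) :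
    lam A n m x = (Real.log ‖sol A n x‖ - Real.log ‖sol A m x‖) / (n - m) := by
  rw [lam, Real.log_div (norm_ne_zero_iff.2 hn) (norm_ne_zero_iff.2 hm)]

theorem abs_lam_le {c : ℝ} (hinv : ∀ n, Ainv n * A n = 1) (hc : ∀ n, ‖A n‖ ≤ c ∧ ‖Ainv n‖ ≤ c)
    (hx : x ≠ 0) (hmn : m < n) : |lam A n m x| ≤ Real.log c := by
  have hstep (j : ℕ) : |Real.log ‖sol A (j + 1) x‖ - Real.log ‖sol A j x‖| ≤ Real.log c := by
    rw [sol_succ]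
    exact abs_log_norm_apply_sub_le (hc j).1 (hc j).2 (hinv j) (sol_ne_zero hinv hx j)
  have hpos : (0 : ℝ) < n - m := sub_pos.2 (by exact_mod_cast hmn)
  rw [lam_eq_sub_div (sol_ne_zero hinv hx n) (sol_ne_zero hinv hx m), abs_div, abs_of_pos hpos,
    div_le_iff₀ hpos, mul_comm]
  exact abs_sub_le_of_abs_succ_sub_le (u := fun j => Real.log ‖sol A j x‖) hstep hmn.le

theorem sol_conj (hT : ∀ n, T n * Tinv n = 1) (heq : ∀ n, B n = Tinv (n + 1) * A n * T n)
    (n : ℕ) (x : Euc d) : sol B n (Tinv 0 x) = Tinv n (sol A n x) := by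
  induction n with
  | zero => rfl
  | succ n ih =>
    rw [sol_succ, sol_succ, ih, heq, mul_apply_eq_comp, mul_apply_eq_comp,
      leftInverse_of_mul_eq_one (hT n)]

theorem abs_lam_sub_lam_conj_le {c : ℝ} (hinv : ∀ n, Ainv n * A n = 1)
    (hT : ∀ n, T n * Tinv n = 1) (hc : ∀ n, ‖T n‖ ≤ c ∧ ‖Tinv n‖ ≤ c)
    (heq : ∀ n, B n = Tinv (n + 1) * A n * T n) (hx : x ≠ 0) (hmn : m < n) :
    |lam A n m x - lam B n m (Tinv 0 x)| ≤ 2 * Real.log c / (n - m) := by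
  have hsolB_ne (j : ℕ) : sol B j (Tinv 0 x) ≠ 0 := by
    rw [sol_conj hT heq]
    exact (map_ne_zero_iff _ (leftInverse_of_mul_eq_one (hT j)).injective).2
      (sol_ne_zero hinv hx j)
  have hdist (j : ℕ) :
      |Real.log ‖sol B j (Tinv 0 x)‖ - Real.log ‖sol A j x‖| ≤ Real.log c := by
    rw [sol_conj hT heq]
    exact abs_log_norm_apply_sub_le (hc j).2 (hc j).1 (hT j) (sol_ne_zero hinv hx j)
  have hpos : (0 : ℝ) < n - m := sub_pos.2 (by exact_mod_cast hmn)
  rw [lam_eq_sub_div (sol_ne_zero hinv hx n) (sol_ne_zero hinv hx m),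
    lam_eq_sub_div (hsolB_ne n) (hsolB_ne m), ← sub_div, abs_div, abs_of_pos hpos]
  refine div_le_div_of_nonneg_right ?_ hpos.le
  calc _ = |(Real.log ‖sol B m (Tinv 0 x)‖ - Real.log ‖sol A m x‖) -
          (Real.log ‖sol B n (Tinv 0 x)‖ - Real.log ‖sol A n x‖)| := by ring_nf
    _ ≤ _ := (abs_sub _ _).trans (by linarith [hdist m, hdist n])

end Solutions

theorem stmt19_general {d : ℕ} (A Ainv B T Tinv : ℕ → (Euc d →L[ℝ] Euc d))
    (hA : IsLyapunov A Ainv) (hT : IsLyapunov T Tinv)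
    (heq : ∀ n, B n = Tinv (n + 1) * A n * T n)
    (L : Submodule ℝ (Euc d)) :
    upperBohl A (L : Set (Euc d)) = upperBohl B ((fun x => Tinv 0 x) '' (L : Set (Euc d))) ∧
    lowerBohl A (L : Set (Euc d)) = lowerBohl B ((fun x => Tinv 0 x) '' (L : Set (Euc d))) := by
  obtain ⟨cA, -, hcA⟩ := hA.exists_bound
  obtain ⟨cT, hcT1, hcT⟩ := hT.exists_bound
  have hbound (n m : ℕ) (x : Euc d) (hmn : m < n) (_ : x ∈ (L : Set (Euc d))) (hx : x ≠ 0) :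
      |lam A n m x| ≤ Real.log cA :=
    abs_lam_le hA.2.1 hcA hx hmn
  have hclose (n m : ℕ) (x : Euc d) (hmn : m < n) (_ : x ∈ (L : Set (Euc d))) (hx : x ≠ 0) :
      |lam A n m x - lam B n m (Tinv 0 x)| ≤ 2 * Real.log cT / (n - m) :=
    abs_lam_sub_lam_conj_le hA.2.1 hT.1 hcT heq hx hmn
  have hC : 0 ≤ 2 * Real.log cT := mul_nonneg zero_le_two (Real.log_nonneg hcT1)
  rw [upperBohl_eq, upperBohl_eq, lowerBohl_eq, lowerBohl_eq, bohlRates_image (lam B) _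
    (S := fun x => Tinv 0 x) (leftInverse_of_mul_eq_one (hT.1 0)).injective (map_zero (Tinv 0))]
  exact ⟨iInf_sSup_bohlRates_eq hbound hclose hC, iSup_sInf_bohlRates_eq hbound hclose hC⟩

theorem stmt19 {d : ℕ} (A Ainv B Binv T Tinv : ℕ → (Euc d →L[ℝ] Euc d))
    (hA : IsLyapunov A Ainv) (hB : IsLyapunov B Binv) (hT : IsLyapunov T Tinv)
    (heq : ∀ n, B n = Tinv (n + 1) * A n * T n)
    (L : Submodule ℝ (Euc d)) :
    upperBohl A (L : Set (Euc d)) = upperBohl B ((fun x => Tinv 0 x) '' (L : Set (Euc d))) ∧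
    lowerBohl A (L : Set (Euc d)) = lowerBohl B ((fun x => Tinv 0 x) '' (L : Set (Euc d))) :=
  stmt19_general A Ainv B T Tinv hA hT heq L
end
end
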